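/- Let A be a central hyperplane arrangement in K^l, X a flat of A with I(X) its defining prime ideal, and Y a flat of A with X ⊆ Y. Then I(Y) is an associated prime ideal of S/J(A) if and only if I(Y) is an associated prime ideal of S/J(A_X). -/

import Mathlib

open MvPolynomial

/-- The polynomial ring `S = K[x_1,...,x_l]`. -/
abbrev PolyS (K : Type*) [CommSemiring K] (l : ℕ) := MvPolynomial (Fin l) K

/-- A central hyperplane arrangement in `K^l`, given by its finite set of
(nonzero, homogeneous of degree 1) defining linear forms. -/
structure Arrangement (K : Type*) [Field K] (l : ℕ) where
  forms : Finset (PolyS K l)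
  homog : ∀ f ∈ forms, MvPolynomial.IsHomogeneous f 1
  nonzero : ∀ f ∈ forms, f ≠ 0

namespace Arrangement

variable {K : Type*} [Field K] {l : ℕ}

/-- The defining polynomial `Q(A)`. -/
noncomputable def Q (A : Arrangement K l) : PolyS K l := ∏ f ∈ A.forms, f

/-- The Jacobian ideal `J(A)`, generated by `Q(A)` and its partial derivatives. -/
noncomputable def jac (A : Arrangement K l) : Ideal (PolyS K l) :=
  Ideal.span ({A.Q} ∪ Set.range fun i : Fin l => pderiv i A.Q)

/-- The hyperplane (zero set) of a linear form. -/
def zeroSet (f : PolyS K l) : Set (Fin l → K) := {v | eval v f = 0}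

/-- `X` is a flat (element of the intersection lattice `L(A)`). -/
def IsFlat (A : Arrangement K l) (X : Set (Fin l → K)) : Prop :=
  ∃ B : Finset (PolyS K l), B ⊆ A.forms ∧ X = ⋂ f ∈ B, zeroSet f

/-- The localization `A_X` of `A` at a flat `X`: hyperplanes containing `X`. -/
noncomputable def locArr (A : Arrangement K l) (X : Set (Fin l → K)) : Arrangement K l :=
  letI : DecidablePred fun f : PolyS K l => X ⊆ zeroSet f := fun _ => Classical.propDecidable _
  { forms := A.forms.filter fun f => X ⊆ zeroSet f
    homog := fun f hf => A.homog f (Finset.mem_filter.mp hf).1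
    nonzero := fun f hf => A.nonzero f (Finset.mem_filter.mp hf).1 }

/-- The ideal `I(X)` generated by the linear forms of hyperplanes containing `X`. -/
noncomputable def flatIdeal (A : Arrangement K l) (X : Set (Fin l → K)) : Ideal (PolyS K l) :=
  Ideal.span {f | f ∈ A.forms ∧ X ⊆ zeroSet f}

/-- The coefficient (normal) vector of a linear form. -/
noncomputable def coeffVec (f : PolyS K l) : Fin l → K :=
  fun i => MvPolynomial.coeff (Finsupp.single i 1) f

/-- The rank (codimension) of a flat `X`, as the dimension of the span of the
normal vectors of the hyperplanes containing `X`. -/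
noncomputable def flatRank (A : Arrangement K l) (X : Set (Fin l → K)) : ℕ :=
  Module.finrank K (Submodule.span K (coeffVec '' {f | f ∈ A.forms ∧ X ⊆ zeroSet f}))

/-- The module `D(A)` of logarithmic derivations, viewed as the submodule of
`S^l` of coefficient vectors `δ` with `δ(Q(A)) ∈ ⟨Q(A)⟩`. -/
noncomputable def derMod (A : Arrangement K l) : Submodule (PolyS K l) (Fin l → PolyS K l) where
  carrier := {δ | (∑ i, δ i * pderiv i A.Q) ∈ Ideal.span {A.Q}}
  add_mem' := by
    intro a b ha hb
    simp only [Set.mem_setOf_eq, Pi.add_apply, add_mul, Finset.sum_add_distrib] at *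
    exact Ideal.add_mem _ ha hb
  zero_mem' := by simp
  smul_mem' := by
    intro c a ha
    simp only [Set.mem_setOf_eq, Pi.smul_apply, smul_eq_mul, mul_assoc, ← Finset.mul_sum] at *
    exact Ideal.mul_mem_left _ _ ha

/-- The submodule `D_0(A) = {δ : δ(Q(A)) = 0}`. -/
noncomputable def derMod0 (A : Arrangement K l) : Submodule (PolyS K l) (Fin l → PolyS K l) :=
  LinearMap.ker
    ((Fintype.linearCombination (PolyS K l)) fun i : Fin l => pderiv i A.Q)

/-- `A` is a free arrangement: `D(A)` is a free `S`-module. -/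
def IsFreeArr (A : Arrangement K l) : Prop := Module.Free (PolyS K l) A.derMod

end Arrangement

/-- The graded maximal ideal `(x_1,...,x_l)` of `S`. -/
noncomputable def mIdeal (K : Type*) [Field K] (l : ℕ) : Ideal (PolyS K l) :=
  Ideal.span (Set.range (MvPolynomial.X : Fin l → PolyS K l))

/-- A finite minimal free resolution of an `R`-module `M`, with minimality meaning
that all entries of the differentials lie in the ideal `m`; `b n` is the `n`-th
(total) Betti number, i.e. the rank of the `n`-th free module. -/
structure MinFreeRes (R : Type*) [CommRing R] (m : Ideal R)
    (M : Type*) [AddCommGroup M] [Module R M] (b : ℕ → ℕ) where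
  len : ℕ
  aug : (Fin (b 0) → R) →ₗ[R] M
  d : (n : ℕ) → ((Fin (b (n + 1)) → R) →ₗ[R] (Fin (b n) → R))
  aug_surj : Function.Surjective aug
  exact_aug : LinearMap.range (d 0) = LinearMap.ker aug
  exact : ∀ n, LinearMap.range (d (n + 1)) = LinearMap.ker (d n)
  minimal : ∀ n j i, d n (Pi.single j 1) i ∈ m
  finite : ∀ n, len < n → b n = 0

/-!
Write `Q(A) = Q(A_X) · r`, where `r` is the product of the forms of the hyperplanes not
containing `X`. The Leibniz rule gives `J(A) ⊆ J(A_X)` and `r² J(A_X) ⊆ J(A)`, so `S/J(A)` and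
`S/J(A_X)` become isomorphic once `r` is inverted and have the same associated primes not
containing `r`. Every factor of `r` is nonzero somewhere on `X ⊆ Y`, where `I(Y)` vanishes, so
`r ∉ I(Y)` as soon as `I(Y)` is prime.
-/

section AssociatedPrimes

variable {R : Type*} [CommRing R]

theorem Ideal.eq_radical_of_le_of_mul_mem {P I₁ I₂ : Ideal R} {r : R} (hP : P.IsPrime)
    (hr : r ∉ P) (hle : I₁ ≤ I₂) (hmul : ∀ f ∈ I₂, r * f ∈ I₁) (h : P = I₁.radical) :
    P = I₂.radical := by
  subst h
  refine le_antisymm (Ideal.radical_mono hle) fun f ⟨n, hn⟩ => ?_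
  have hrf : r * f ^ n ∈ I₁.radical := Ideal.le_radical (hmul _ hn)
  exact hP.mem_of_pow_mem n ((hP.mem_or_mem hrf).resolve_left hr)

theorem mem_colon_bot_singleton_mk_iff (J : Ideal R) (g f : R) :
    f ∈ (⊥ : Submodule R (R ⧸ J)).colon {Ideal.Quotient.mk J g} ↔ f * g ∈ J := by
  rw [Submodule.mem_colon_singleton, Submodule.mem_bot, ← Ideal.Quotient.eq_zero_iff_mem]
  rfl

theorem mem_associatedPrimes_quotient_iff_of_le_of_mul_mem {J J' P : Ideal R} {r : R}
    (hle : J ≤ J') (hmul : ∀ f ∈ J', r * f ∈ J) (hr : r ∉ P) :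
    P ∈ associatedPrimes R (R ⧸ J) ↔ P ∈ associatedPrimes R (R ⧸ J') := by
  constructor
  · rintro ⟨hP, x, hx⟩
    obtain ⟨g, rfl⟩ := Ideal.Quotient.mk_surjective x
    refine ⟨hP, Ideal.Quotient.mk J' g, Ideal.eq_radical_of_le_of_mul_mem hP hr ?_ ?_ hx⟩
    · intro f hf
      rw [mem_colon_bot_singleton_mk_iff] at hf ⊢
      exact hle hf
    · intro f hf
      rw [mem_colon_bot_singleton_mk_iff] at hf ⊢
      rw [mul_assoc]
      exact hmul _ hf
  · rintro ⟨hP, x, hx⟩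
    obtain ⟨g, rfl⟩ := Ideal.Quotient.mk_surjective x
    refine ⟨hP, Ideal.Quotient.mk J (r * g), Ideal.eq_radical_of_le_of_mul_mem hP hr ?_ ?_ hx⟩
    · intro f hf
      rw [mem_colon_bot_singleton_mk_iff] at hf ⊢
      rw [mul_left_comm]
      exact hmul _ hf
    · intro f hf
      rw [mem_colon_bot_singleton_mk_iff] at hf ⊢
      rw [mul_assoc, mul_left_comm]
      exact hle hf

end AssociatedPrimes

section JacobianIdeal

variable {R σ : Type*} [CommRing R]

noncomputable def MvPolynomial.jacobianIdeal (p : MvPolynomial σ R) : Ideal (MvPolynomial σ R) :=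
  Ideal.span ({p} ∪ Set.range fun i => pderiv i p)

theorem MvPolynomial.jacobianIdeal_mul_le (p q : MvPolynomial σ R) :
    jacobianIdeal (p * q) ≤ jacobianIdeal p := by
  have hp : p ∈ jacobianIdeal p := Ideal.subset_span (Or.inl rfl)
  have hdp (i : σ) : pderiv i p ∈ jacobianIdeal p := Ideal.subset_span (Or.inr ⟨i, rfl⟩)
  rw [jacobianIdeal, Ideal.span_le]
  rintro g (rfl | ⟨i, rfl⟩)
  · exact Ideal.mul_mem_right _ _ hp
  · change pderiv i (p * q) ∈ jacobianIdeal p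
    rw [Derivation.leibniz, smul_eq_mul, smul_eq_mul]
    exact Ideal.add_mem _ (Ideal.mul_mem_right _ _ hp) (Ideal.mul_mem_left _ _ (hdp i))

theorem MvPolynomial.sq_mul_mem_jacobianIdeal_mul {p f : MvPolynomial σ R} (q : MvPolynomial σ R)
    (hf : f ∈ jacobianIdeal p) : q ^ 2 * f ∈ jacobianIdeal (p * q) := by
  have hpq : p * q ∈ jacobianIdeal (p * q) := Ideal.subset_span (Or.inl rfl)
  have hdpq (i : σ) : pderiv i (p * q) ∈ jacobianIdeal (p * q) :=
    Ideal.subset_span (Or.inr ⟨i, rfl⟩)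
  suffices jacobianIdeal p ≤ (jacobianIdeal (p * q)).colon (Ideal.span {q ^ 2}) by
    simpa only [Submodule.mem_colon_span_singleton, smul_eq_mul, mul_comm f] using this hf
  rw [jacobianIdeal, Ideal.span_le]
  rintro g (hg | ⟨i, rfl⟩) <;> rw [SetLike.mem_coe, Submodule.mem_colon_span_singleton,
    smul_eq_mul]
  · rw [Set.mem_singleton_iff.mp hg, show p * q ^ 2 = q * (p * q) by ring]
    exact Ideal.mul_mem_left _ _ hpq
  · have hleib : pderiv i p * q ^ 2 = q * pderiv i (p * q) - p * q * pderiv i q := by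
      rw [Derivation.leibniz, smul_eq_mul, smul_eq_mul]
      ring
    rw [hleib]
    exact Ideal.sub_mem _ (Ideal.mul_mem_left _ _ (hdpq i)) (Ideal.mul_mem_right _ _ hpq)

end JacobianIdeal

namespace Arrangement

variable {K : Type*} [Field K] {l : ℕ}

theorem jac_eq_jacobianIdeal (A : Arrangement K l) : A.jac = jacobianIdeal A.Q := rfl

open Classical in
theorem Q_eq_Q_locArr_mul (A : Arrangement K l) (X : Set (Fin l → K)) :
    A.Q = (A.locArr X).Q * ∏ f ∈ A.forms with ¬X ⊆ zeroSet f, f := by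
  rw [Q, Q, locArr, Finset.prod_filter_mul_prod_filter_not]

theorem flatIdeal_le_ker_eval (A : Arrangement K l) {Y : Set (Fin l → K)} {v : Fin l → K}
    (hv : v ∈ Y) : A.flatIdeal Y ≤ RingHom.ker (eval v) := by
  rw [flatIdeal, Ideal.span_le]
  rintro f ⟨-, hf⟩
  exact hf hv

open Classical in
theorem prod_forms_not_containing_notMem_flatIdeal (A : Arrangement K l) {X Y : Set (Fin l → K)}
    (hXY : X ⊆ Y) (hP : (A.flatIdeal Y).IsPrime) :
    ∏ f ∈ A.forms with ¬X ⊆ zeroSet f, f ∉ A.flatIdeal Y := by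
  rw [hP.prod_mem_iff_exists_mem]
  rintro ⟨f, hf, hfY⟩
  exact (Finset.mem_filter.mp hf).2 fun v hv => A.flatIdeal_le_ker_eval (hXY hv) hfY

end Arrangement

open Arrangement in
theorem flatIdeal_mem_associatedPrimes_iff_general {K : Type*} [Field K] {l : ℕ}
    (A : Arrangement K l) (X Y : Set (Fin l → K)) (hXY : X ⊆ Y) :
    A.flatIdeal Y ∈ associatedPrimes (PolyS K l) (PolyS K l ⧸ A.jac) ↔
      A.flatIdeal Y ∈ associatedPrimes (PolyS K l) (PolyS K l ⧸ (A.locArr X).jac) := by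
  classical
  by_cases hP : (A.flatIdeal Y).IsPrime
  · set r := ∏ f ∈ A.forms with ¬X ⊆ zeroSet f, f
    have hQ : A.Q = (A.locArr X).Q * r := A.Q_eq_Q_locArr_mul X
    refine mem_associatedPrimes_quotient_iff_of_le_of_mul_mem (r := r ^ 2) ?_ ?_ ?_
    · rw [jac_eq_jacobianIdeal, hQ]
      exact jacobianIdeal_mul_le _ _
    · intro f hf
      rw [jac_eq_jacobianIdeal, hQ]
      exact sq_mul_mem_jacobianIdeal_mul r hf
    · exact fun hr => A.prod_forms_not_containing_notMem_flatIdeal hXY hP (hP.mem_of_pow_mem 2 hr)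
  · exact iff_of_false (fun h => hP (IsAssociatedPrime.isPrime h))
      (fun h => hP (IsAssociatedPrime.isPrime h))

open Arrangement in
/-- For flats `X ⊆ Y` of a central arrangement `A`, the prime `I(Y)` is an associated
prime of `S/J(A)` if and only if it is an associated prime of `S/J(A_X)`. -/
theorem flatIdeal_mem_associatedPrimes_iff {K : Type*} [Field K] [CharZero K] {l : ℕ}
    (A : Arrangement K l) (X Y : Set (Fin l → K))
    (hX : A.IsFlat X) (hY : A.IsFlat Y) (hXY : X ⊆ Y) :
    A.flatIdeal Y ∈ associatedPrimes (PolyS K l) (PolyS K l ⧸ A.jac) ↔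
      A.flatIdeal Y ∈ associatedPrimes (PolyS K l) (PolyS K l ⧸ (A.locArr X).jac) :=
  flatIdeal_mem_associatedPrimes_iff_general A X Y hXY
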